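/- arXiv:2303.11942 — 10 statements merged into one kernel-verified Lean document; each statement's English description precedes it below -/
import Mathlib

section
/- The collection of all parametrizations P : U → 𝔓(X) (U open in some Euclidean space) satisfying the following property forms a diffeology on the power set 𝔓(X): for every r₀ ∈ U with P(r₀) ≠ ∅, there exists an open neighborhood V ⊆ U of r₀ and a plot σ : V → X such that σ(r) ∈ P(r) for every r ∈ V. -/
open Set Function

universe u

/-- A diffeology on a set `X`, encoded via total functions on `Fin n → ℝ`
together with a designated open domain `U`. -/
structure Diffeology' (X : Type u) where
  IsPlot : (n : ℕ) → Set (Fin n → ℝ) → ((Fin n → ℝ) → X) → Prop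
  isOpen_of_isPlot : ∀ {n : ℕ} {U : Set (Fin n → ℝ)} {P : (Fin n → ℝ) → X},
    IsPlot n U P → IsOpen U
  const_isPlot : ∀ (n : ℕ) (U : Set (Fin n → ℝ)), IsOpen U → ∀ x : X,
    IsPlot n U (fun _ => x)
  locality : ∀ {n : ℕ} {U : Set (Fin n → ℝ)} {P : (Fin n → ℝ) → X}, IsOpen U →
    (∀ r ∈ U, ∃ V, IsOpen V ∧ r ∈ V ∧ V ⊆ U ∧ IsPlot n V P) → IsPlot n U P
  smooth_comp : ∀ {n m : ℕ} {U : Set (Fin n → ℝ)} {P : (Fin n → ℝ) → X}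
    {V : Set (Fin m → ℝ)} {F : (Fin m → ℝ) → (Fin n → ℝ)},
    IsPlot n U P → IsOpen V → ContDiffOn ℝ (⊤ : ℕ∞) F V → Set.MapsTo F V U →
    IsPlot m V (P ∘ F)
  plot_congr : ∀ {n : ℕ} {U : Set (Fin n → ℝ)} {P Q : (Fin n → ℝ) → X},
    IsPlot n U P → Set.EqOn P Q U → IsPlot n U Q

/-- The weak power set property: near every parameter with nonempty value there is a
local selection plot. -/
def WeakProp {X : Type u} (D : Diffeology' X)
    (n : ℕ) (U : Set (Fin n → ℝ)) (P : (Fin n → ℝ) → Set X) : Prop :=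
  IsOpen U ∧ ∀ r₀ ∈ U, (P r₀).Nonempty →
    ∃ (V : Set (Fin n → ℝ)) (σ : (Fin n → ℝ) → X),
      IsOpen V ∧ r₀ ∈ V ∧ V ⊆ U ∧ D.IsPlot n V σ ∧ ∀ r ∈ V, σ r ∈ P r

namespace WeakProp

variable {X : Type u} {D : Diffeology' X}

theorem isOpen {n : ℕ} {U : Set (Fin n → ℝ)} {P : (Fin n → ℝ) → Set X}
    (hP : WeakProp D n U P) : IsOpen U :=
  hP.1

theorem const (D : Diffeology' X) (n : ℕ) {U : Set (Fin n → ℝ)} (hU : IsOpen U)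
    (A : Set X) : WeakProp D n U (fun _ => A) :=
  ⟨hU, fun _ hr₀ ⟨a, ha⟩ =>
    ⟨U, fun _ => a, hU, hr₀, subset_rfl, D.const_isPlot n U hU a, fun _ _ => ha⟩⟩

theorem of_locally {n : ℕ} {U : Set (Fin n → ℝ)} {P : (Fin n → ℝ) → Set X}
    (hU : IsOpen U)
    (hloc : ∀ r ∈ U, ∃ V, IsOpen V ∧ r ∈ V ∧ V ⊆ U ∧ WeakProp D n V P) :
    WeakProp D n U P := by
  refine ⟨hU, fun r₀ hr₀ hne => ?_⟩
  obtain ⟨V, -, hr₀V, hVU, hPV⟩ := hloc r₀ hr₀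
  obtain ⟨W, σ, hW, hr₀W, hWV, hσ, hσP⟩ := hPV.2 r₀ hr₀V hne
  exact ⟨W, σ, hW, hr₀W, hWV.trans hVU, hσ, hσP⟩

theorem comp_contDiffOn {n m : ℕ} {U : Set (Fin n → ℝ)} {P : (Fin n → ℝ) → Set X}
    {V : Set (Fin m → ℝ)} {F : (Fin m → ℝ) → (Fin n → ℝ)} (hP : WeakProp D n U P)
    (hV : IsOpen V) (hF : ContDiffOn ℝ (⊤ : ℕ∞) F V) (hFVU : MapsTo F V U) :
    WeakProp D m V (P ∘ F) := by
  refine ⟨hV, fun r₀ hr₀ hne => ?_⟩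
  obtain ⟨W, σ, hW, hFr₀W, -, hσ, hσP⟩ := hP.2 (F r₀) (hFVU hr₀) hne
  have hVW : IsOpen (V ∩ F ⁻¹' W) := hF.continuousOn.isOpen_inter_preimage hV hW
  exact ⟨V ∩ F ⁻¹' W, σ ∘ F, hVW, ⟨hr₀, hFr₀W⟩, inter_subset_left,
    D.smooth_comp hσ hVW (hF.mono inter_subset_left) (fun _ hr => hr.2),
    fun r hr => hσP (F r) hr.2⟩

theorem congr {n : ℕ} {U : Set (Fin n → ℝ)} {P Q : (Fin n → ℝ) → Set X}
    (hP : WeakProp D n U P) (hPQ : EqOn P Q U) : WeakProp D n U Q := by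
  refine ⟨hP.1, fun r₀ hr₀ hne => ?_⟩
  obtain ⟨V, σ, hV, hr₀V, hVU, hσ, hσP⟩ := hP.2 r₀ hr₀ (hPQ hr₀ ▸ hne)
  exact ⟨V, σ, hV, hr₀V, hVU, hσ, fun r hr => hPQ (hVU hr) ▸ hσP r hr⟩

end WeakProp

def weakPowerSetDiffeology {X : Type u} (D : Diffeology' X) : Diffeology' (Set X) where
  IsPlot := WeakProp D
  isOpen_of_isPlot := WeakProp.isOpen
  const_isPlot _ _ hU := WeakProp.const D _ hU
  locality := WeakProp.of_locally
  smooth_comp := WeakProp.comp_contDiffOn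
  plot_congr := WeakProp.congr

/-- the parametrizations satisfying the weak property (WPD) form a
diffeology on the power set `𝔓(X)`, the weak power set diffeology. -/
theorem weak_power_set_diffeology_exists {X : Type u} (D : Diffeology' X) :
    ∃ Dw : Diffeology' (Set X),
      ∀ (n : ℕ) (U : Set (Fin n → ℝ)) (P : (Fin n → ℝ) → Set X),
        Dw.IsPlot n U P ↔ WeakProp D n U P :=
  ⟨weakPowerSetDiffeology D, fun _ _ _ => Iff.rfl⟩
end

section
/- Let X and Y be diffeological spaces and let φ : X → 𝔓(Y) be a set-valued map that is smooth when 𝔓(Y) carries the union power set diffeology. Then φ is lower semi-continuous with respect to the D-topologies: for every D-open subset O ⊆ Y, the set φ⁻¹(O) = {x ∈ X : φ(x) ∩ O ≠ ∅} is D-open in X. -/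
open Set Function

universe u

/-- The UPD property: `P : U → 𝔓(X)` admits local implicit plots through every point of
every value, where plots of `X` are given by the predicate `Pl`. This characterizes the
plots of the union power set diffeology. -/
def UPDProp {X : Type u} (Pl : (n : ℕ) → Set (Fin n → ℝ) → ((Fin n → ℝ) → X) → Prop)
    (n : ℕ) (U : Set (Fin n → ℝ)) (P : (Fin n → ℝ) → Set X) : Prop :=
  IsOpen U ∧ ∀ r₀ ∈ U, ∀ x₀ ∈ P r₀,
    ∃ (V : Set (Fin n → ℝ)) (σ : (Fin n → ℝ) → X),
      IsOpen V ∧ r₀ ∈ V ∧ V ⊆ U ∧ Pl n V σ ∧ σ r₀ = x₀ ∧ ∀ r ∈ V, σ r ∈ P r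

/-- The D-topology: a set is D-open iff its preimage by every plot is open. -/
def DOpen {X : Type u} (D : Diffeology' X) (O : Set X) : Prop :=
  ∀ (n : ℕ) (U : Set (Fin n → ℝ)) (P : (Fin n → ℝ) → X),
    D.IsPlot n U P → IsOpen {r ∈ U | P r ∈ O}

theorem UPDProp.isOpen_setOf_inter_nonempty {Y : Type u} {D : Diffeology' Y} {n : ℕ}
    {U : Set (Fin n → ℝ)} {Q : (Fin n → ℝ) → Set Y} (hQ : UPDProp D.IsPlot n U Q)
    {O : Set Y} (hO : DOpen D O) :
    IsOpen {r ∈ U | (Q r ∩ O).Nonempty} := by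
  rw [isOpen_iff_forall_mem_open]
  rintro r₀ ⟨hr₀U, y₀, hy₀Q, hy₀O⟩
  obtain ⟨V, σ, -, hr₀V, hVU, hσ, rfl, hσQ⟩ := hQ.2 r₀ hr₀U y₀ hy₀Q
  -- the implicit plot `σ` through `y₀` keeps meeting `O` on the open set `σ⁻¹(O)` around `r₀`
  exact ⟨{r ∈ V | σ r ∈ O}, fun r hr => ⟨hVU hr.1, σ r, hσQ r hr.1, hr.2⟩,
    hO n V σ hσ, hr₀V, hy₀O⟩

/-- a set-valued map smooth for the union power set diffeology is lower
semi-continuous for the D-topologies. -/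
theorem smooth_set_valued_lsc {X : Type u} {Y : Type u}
    (Dx : Diffeology' X) (Dy : Diffeology' Y) (φ : X → Set Y)
    (hφ : ∀ (n : ℕ) (U : Set (Fin n → ℝ)) (P : (Fin n → ℝ) → X),
      Dx.IsPlot n U P → UPDProp Dy.IsPlot n U (fun r => φ (P r)))
    (O : Set Y) (hO : DOpen Dy O) :
    DOpen Dx {x | (φ x ∩ O).Nonempty} :=
  fun n U P hP => (hφ n U P hP).isOpen_setOf_inter_nonempty hO
end

section
/- The canonical map ι : X → 𝔓(X), ι(x) = {x}, is an induction into the union power space 𝔓ᵤ(X): a parametrization P : U → X is a plot of X if and only if ι ∘ P is a plot of the union power set diffeology. -/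
open Set Function

universe u

/-- A diffeology on a set `X`, encoded via total functions on `Fin n → ℝ`
together with a designated open domain `U`. -/
structure LocalDiffeology (X : Type u) where
  IsPlot : (n : ℕ) → Set (Fin n → ℝ) → ((Fin n → ℝ) → X) → Prop
  isOpen_of_isPlot : ∀ {n : ℕ} {U : Set (Fin n → ℝ)} {P : (Fin n → ℝ) → X},
    IsPlot n U P → IsOpen U
  const_isPlot : ∀ (n : ℕ) (U : Set (Fin n → ℝ)), IsOpen U → ∀ x : X,
    IsPlot n U (fun _ => x)
  locality : ∀ {n : ℕ} {U : Set (Fin n → ℝ)} {P : (Fin n → ℝ) → X}, IsOpen U →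
    (∀ r ∈ U, ∃ V, IsOpen V ∧ r ∈ V ∧ V ⊆ U ∧ IsPlot n V P) → IsPlot n U P
  smooth_comp : ∀ {n m : ℕ} {U : Set (Fin n → ℝ)} {P : (Fin n → ℝ) → X}
    {V : Set (Fin m → ℝ)} {F : (Fin m → ℝ) → (Fin n → ℝ)},
    IsPlot n U P → IsOpen V → ContDiffOn ℝ (⊤ : ℕ∞) F V → Set.MapsTo F V U →
    IsPlot m V (P ∘ F)
  plot_congr : ∀ {n : ℕ} {U : Set (Fin n → ℝ)} {P Q : (Fin n → ℝ) → X},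
    IsPlot n U P → Set.EqOn P Q U → IsPlot n U Q

namespace LocalDiffeology

variable {X : Type*} (D : LocalDiffeology X) {n : ℕ} {U : Set (Fin n → ℝ)}

theorem updProp_singleton_of_isPlot {P : (Fin n → ℝ) → X} (hP : D.IsPlot n U P) :
    UPDProp D.IsPlot n U (fun r => ({P r} : Set X)) :=
  have hU := D.isOpen_of_isPlot hP
  ⟨hU, fun _ hr₀ _ hx₀ => ⟨U, P, hU, hr₀, subset_rfl, hP, hx₀.symm, fun _ _ => rfl⟩⟩

theorem isPlot_of_updProp_of_subsingleton {S : (Fin n → ℝ) → Set X} {P : (Fin n → ℝ) → X}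
    (hS : UPDProp D.IsPlot n U S) (hPS : ∀ r ∈ U, P r ∈ S r)
    (hsub : ∀ r ∈ U, (S r).Subsingleton) : D.IsPlot n U P := by
  obtain ⟨hU, hlift⟩ := hS
  refine D.locality hU fun r₀ hr₀ => ?_
  obtain ⟨V, σ, hV, hr₀V, hVU, hσ, -, hσS⟩ := hlift r₀ hr₀ (P r₀) (hPS r₀ hr₀)
  have hσP : EqOn σ P V := fun r hr => hsub r (hVU hr) (hσS r hr) (hPS r (hVU hr))
  exact ⟨V, hV, hr₀V, hVU, D.plot_congr hσ hσP⟩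

end LocalDiffeology

/-- the canonical map `ι : X → 𝔓ᵤ(X)`, `ι x = {x}`, is an induction:
`P` is a plot of `X` iff `ι ∘ P` is a plot of the union power set diffeology. -/
theorem singleton_map_induction {X : Type u} (D : LocalDiffeology X)
    (n : ℕ) (U : Set (Fin n → ℝ)) (P : (Fin n → ℝ) → X) :
    D.IsPlot n U P ↔ UPDProp D.IsPlot n U (fun r => ({P r} : Set X)) :=
  ⟨D.updProp_singleton_of_isPlot, fun h =>
    D.isPlot_of_updProp_of_subsingleton h (fun _ _ => rfl) fun _ _ => subsingleton_singleton⟩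
end

section
/- Let f : X → Y be a map between diffeological spaces and f⋆ : 𝔓ᵤ(X) → 𝔓ᵤ(Y) the induced map on power sets, f⋆(A) = f(A), where both power sets carry the union power set diffeology. Then f is smooth if and only if f⋆ is smooth. -/
open Set Function

universe u

/-- A diffeology on a set `X`, encoded via total functions on `Fin n → ℝ`
together with a designated open domain `U`. -/
structure DiffeologyData (X : Type u) where
  IsPlot : (n : ℕ) → Set (Fin n → ℝ) → ((Fin n → ℝ) → X) → Prop
  isOpen_of_isPlot : ∀ {n : ℕ} {U : Set (Fin n → ℝ)} {P : (Fin n → ℝ) → X},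
    IsPlot n U P → IsOpen U
  const_isPlot : ∀ (n : ℕ) (U : Set (Fin n → ℝ)), IsOpen U → ∀ x : X,
    IsPlot n U (fun _ => x)
  locality : ∀ {n : ℕ} {U : Set (Fin n → ℝ)} {P : (Fin n → ℝ) → X}, IsOpen U →
    (∀ r ∈ U, ∃ V, IsOpen V ∧ r ∈ V ∧ V ⊆ U ∧ IsPlot n V P) → IsPlot n U P
  smooth_comp : ∀ {n m : ℕ} {U : Set (Fin n → ℝ)} {P : (Fin n → ℝ) → X}
    {V : Set (Fin m → ℝ)} {F : (Fin m → ℝ) → (Fin n → ℝ)},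
    IsPlot n U P → IsOpen V → ContDiffOn ℝ (⊤ : ℕ∞) F V → Set.MapsTo F V U →
    IsPlot m V (P ∘ F)
  plot_congr : ∀ {n : ℕ} {U : Set (Fin n → ℝ)} {P Q : (Fin n → ℝ) → X},
    IsPlot n U P → Set.EqOn P Q U → IsPlot n U Q

theorem UPDProp.image {X Y : Type u}
    {PlX : (n : ℕ) → Set (Fin n → ℝ) → ((Fin n → ℝ) → X) → Prop}
    {PlY : (n : ℕ) → Set (Fin n → ℝ) → ((Fin n → ℝ) → Y) → Prop} {f : X → Y}
    (hf : ∀ n V σ, PlX n V σ → PlY n V (f ∘ σ)) {n : ℕ} {U : Set (Fin n → ℝ)}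
    {P : (Fin n → ℝ) → Set X} (hP : UPDProp PlX n U P) :
    UPDProp PlY n U (fun r => f '' P r) := by
  refine ⟨hP.1, fun r₀ hr₀ y₀ hy₀ => ?_⟩
  obtain ⟨x₀, hx₀, rfl⟩ := hy₀
  obtain ⟨V, σ, hV, hr₀V, hVU, hσ, hσr₀, hσP⟩ := hP.2 r₀ hr₀ x₀ hx₀
  exact ⟨V, f ∘ σ, hV, hr₀V, hVU, hf n V σ hσ, congrArg f hσr₀,
    fun r hr => mem_image_of_mem f (hσP r hr)⟩

namespace DiffeologyData

variable {X : Type u} (D : DiffeologyData X)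

/-- The singleton map `x ↦ {x}` is an induction of `X` into its union power set. -/
theorem updProp_singleton_iff {n : ℕ} {U : Set (Fin n → ℝ)} {P : (Fin n → ℝ) → X} :
    UPDProp D.IsPlot n U (fun r => {P r}) ↔ D.IsPlot n U P := by
  constructor
  · rintro ⟨hU, hP⟩
    refine D.locality hU fun r hr => ?_
    obtain ⟨V, σ, hV, hrV, hVU, hσ, -, hσP⟩ := hP r hr (P r) rfl
    exact ⟨V, hV, hrV, hVU, D.plot_congr hσ fun s hs => hσP s hs⟩
  · intro hP
    have hU := D.isOpen_of_isPlot hP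
    exact ⟨hU, fun r₀ hr₀ x₀ hx₀ =>
      ⟨U, P, hU, hr₀, subset_rfl, hP, hx₀.symm, fun _ _ => rfl⟩⟩

end DiffeologyData

/-- `f : X → Y` is smooth iff the induced image map
`f⋆ : 𝔓ᵤ(X) → 𝔓ᵤ(Y)`, `A ↦ f '' A`, is smooth for the union power set diffeologies. -/
theorem smooth_iff_image_map_smooth {X : Type u} {Y : Type u}
    (Dx : DiffeologyData X) (Dy : DiffeologyData Y) (f : X → Y) :
    (∀ (n : ℕ) (U : Set (Fin n → ℝ)) (P : (Fin n → ℝ) → X),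
        Dx.IsPlot n U P → Dy.IsPlot n U (f ∘ P)) ↔
    (∀ (n : ℕ) (U : Set (Fin n → ℝ)) (P : (Fin n → ℝ) → Set X),
        UPDProp Dx.IsPlot n U P → UPDProp Dy.IsPlot n U (fun r => f '' P r)) := by
  refine ⟨fun hf n U P hP => hP.image hf, fun hF n U P hP => ?_⟩
  have hfP := hF n U (fun r => {P r}) ((Dx.updProp_singleton_iff).2 hP)
  simp only [image_singleton] at hfP
  exact (Dy.updProp_singleton_iff).1 hfP
end

section
/- Let f : X → Y be a map between diffeological spaces and f⋆ : 𝔓ᵤ(X) → 𝔓ᵤ(Y) the induced image map on power sets with the union power set diffeologies. Then f is an induction if and only if f⋆ is an induction. -/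
open Set Function

universe u

/-!
An induction `f` transports implicit plots both ways: push them forward by `f`, and pull them
back by choosing preimages pointwise, which form a plot because `f` is an induction and which
pass through the prescribed point because `f` is injective. Conversely, `f` is recovered from
`f⋆` on singletons, since `r ↦ {P r}` satisfies the UPD property exactly when `P` is a plot.
-/

namespace UPDProp

variable {X Y : Type u} {n : ℕ} {U : Set (Fin n → ℝ)}

theorem image_s7 {PlX : (n : ℕ) → Set (Fin n → ℝ) → ((Fin n → ℝ) → X) → Prop}
    {PlY : (n : ℕ) → Set (Fin n → ℝ) → ((Fin n → ℝ) → Y) → Prop} {f : X → Y}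
    (hf : ∀ (V : Set (Fin n → ℝ)) (σ : (Fin n → ℝ) → X), PlX n V σ → PlY n V (f ∘ σ))
    {P : (Fin n → ℝ) → Set X} (h : UPDProp PlX n U P) :
    UPDProp PlY n U (fun r => f '' P r) := by
  refine ⟨h.1, fun r₀ hr₀ y₀ hy₀ => ?_⟩
  obtain ⟨x₀, hx₀, rfl⟩ := hy₀
  obtain ⟨V, σ, hV, hr₀V, hVU, hσ, rfl, hσP⟩ := h.2 r₀ hr₀ x₀ hx₀
  exact ⟨V, f ∘ σ, hV, hr₀V, hVU, hf V σ hσ, rfl, fun r hr => mem_image_of_mem f (hσP r hr)⟩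

theorem of_image {PlX : (n : ℕ) → Set (Fin n → ℝ) → ((Fin n → ℝ) → X) → Prop}
    {Dy : Diffeology' Y} {f : X → Y} (hinj : Injective f)
    (hf : ∀ (V : Set (Fin n → ℝ)) (σ : (Fin n → ℝ) → X), Dy.IsPlot n V (f ∘ σ) → PlX n V σ)
    {P : (Fin n → ℝ) → Set X} (h : UPDProp Dy.IsPlot n U (fun r => f '' P r)) :
    UPDProp PlX n U P := by
  refine ⟨h.1, fun r₀ hr₀ x₀ hx₀ => ?_⟩
  obtain ⟨V, σ, hV, hr₀V, hVU, hσ, hσr₀, hσP⟩ := h.2 r₀ hr₀ (f x₀) (mem_image_of_mem f hx₀)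
  have hlift : ∀ r, ∃ x, r ∈ V → x ∈ P r ∧ f x = σ r := fun r => by
    by_cases hr : r ∈ V
    · obtain ⟨x, hx, hfx⟩ := hσP r hr
      exact ⟨x, fun _ => ⟨hx, hfx⟩⟩
    · exact ⟨x₀, fun h' => absurd h' hr⟩
  choose τ hτ using hlift
  have hτ_plot : Dy.IsPlot n V (f ∘ τ) := Dy.plot_congr hσ fun r hr => ((hτ r hr).2).symm
  refine ⟨V, τ, hV, hr₀V, hVU, hf V τ hτ_plot, hinj ?_, fun r hr => (hτ r hr).1⟩
  rw [(hτ r₀ hr₀V).2, hσr₀]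

end UPDProp

theorem Diffeology'.updProp_singleton_iff {X : Type u} (D : Diffeology' X) {n : ℕ}
    {U : Set (Fin n → ℝ)} {P : (Fin n → ℝ) → X} :
    UPDProp D.IsPlot n U (fun r => {P r}) ↔ D.IsPlot n U P := by
  constructor
  · rintro ⟨hU, h⟩
    refine D.locality hU fun r hr => ?_
    obtain ⟨V, σ, hV, hrV, hVU, hσ, -, hσP⟩ := h r hr (P r) rfl
    exact ⟨V, hV, hrV, hVU, D.plot_congr hσ hσP⟩
  · intro hP
    exact ⟨D.isOpen_of_isPlot hP, fun r₀ hr₀ x₀ hx₀ =>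
      ⟨U, P, D.isOpen_of_isPlot hP, hr₀, subset_rfl, hP, hx₀.symm, fun r _ => rfl⟩⟩

/-- `f` is an induction iff the induced image map
`f⋆ : 𝔓ᵤ(X) → 𝔓ᵤ(Y)` is an induction for the union power set diffeologies. -/
theorem induction_iff_image_map_induction {X : Type u} {Y : Type u}
    (Dx : Diffeology' X) (Dy : Diffeology' Y) (f : X → Y) :
    (Function.Injective f ∧
      ∀ (n : ℕ) (U : Set (Fin n → ℝ)) (P : (Fin n → ℝ) → X),
        Dx.IsPlot n U P ↔ Dy.IsPlot n U (f ∘ P)) ↔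
    (Function.Injective (Set.image f) ∧
      ∀ (n : ℕ) (U : Set (Fin n → ℝ)) (P : (Fin n → ℝ) → Set X),
        UPDProp Dx.IsPlot n U P ↔ UPDProp Dy.IsPlot n U (fun r => f '' P r)) := by
  constructor
  · rintro ⟨hinj, hplot⟩
    exact ⟨image_injective.mpr hinj, fun n U P =>
      ⟨UPDProp.image_s7 fun V σ => (hplot n V σ).mp,
        UPDProp.of_image hinj fun V σ => (hplot n V σ).mpr⟩⟩
  · rintro ⟨hinj, hupd⟩
    refine ⟨image_injective.mp hinj, fun n U P => ?_⟩
    have hupd_singleton := hupd n U fun r => {P r}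
    simp only [image_singleton] at hupd_singleton
    rw [← Dx.updProp_singleton_iff, hupd_singleton, ← Dy.updProp_singleton_iff]
    rfl
end

section
/- Let f : X → Y be a map between diffeological spaces. Then f is a diffeomorphism if and only if the induced image map f⋆ : 𝔓ᵤ(X) → 𝔓ᵤ(Y), f⋆(A) = f(A), is a diffeomorphism of the union power spaces. -/
open Set Function

universe u

/-- A diffeology on a set `X`, encoded via total functions on `Fin n → ℝ`
together with a designated open domain `U`. -/
structure DiffeologyStr (X : Type u) where
  IsPlot : (n : ℕ) → Set (Fin n → ℝ) → ((Fin n → ℝ) → X) → Prop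
  isOpen_of_isPlot : ∀ {n : ℕ} {U : Set (Fin n → ℝ)} {P : (Fin n → ℝ) → X},
    IsPlot n U P → IsOpen U
  const_isPlot : ∀ (n : ℕ) (U : Set (Fin n → ℝ)), IsOpen U → ∀ x : X,
    IsPlot n U (fun _ => x)
  locality : ∀ {n : ℕ} {U : Set (Fin n → ℝ)} {P : (Fin n → ℝ) → X}, IsOpen U →
    (∀ r ∈ U, ∃ V, IsOpen V ∧ r ∈ V ∧ V ⊆ U ∧ IsPlot n V P) → IsPlot n U P
  smooth_comp : ∀ {n m : ℕ} {U : Set (Fin n → ℝ)} {P : (Fin n → ℝ) → X}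
    {V : Set (Fin m → ℝ)} {F : (Fin m → ℝ) → (Fin n → ℝ)},
    IsPlot n U P → IsOpen V → ContDiffOn ℝ (⊤ : ℕ∞) F V → Set.MapsTo F V U →
    IsPlot m V (P ∘ F)
  plot_congr : ∀ {n : ℕ} {U : Set (Fin n → ℝ)} {P Q : (Fin n → ℝ) → X},
    IsPlot n U P → Set.EqOn P Q U → IsPlot n U Q

/-! A map `r ↦ {P r}` into `𝔓ᵤ(X)` is a plot exactly when `P` is a plot of `X`, and `f⋆`
preserves singletons, so smoothness of `f⋆` forces smoothness of `f`; conversely `f` carries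
the implicit plots of a plot of `𝔓ᵤ(X)` to implicit plots of its image. Since the only
inverse of `f⋆` is `(f⁻¹)⋆`, the same argument applied to `f⁻¹` handles the inverses. -/

namespace DiffeologyStr

theorem isPlot_iff_updProp_singleton {X : Type u} (D : DiffeologyStr X) {n : ℕ}
    {U : Set (Fin n → ℝ)} {P : (Fin n → ℝ) → X} :
    D.IsPlot n U P ↔ UPDProp D.IsPlot n U (fun r => {P r}) := by
  constructor
  · intro hP
    have hU := D.isOpen_of_isPlot hP
    exact ⟨hU, fun r₀ hr₀ x₀ hx₀ => ⟨U, P, hU, hr₀, subset_rfl, hP, hx₀.symm, fun _ _ => rfl⟩⟩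
  · rintro ⟨hU, hloc⟩
    refine D.locality hU fun r₀ hr₀ => ?_
    obtain ⟨V, σ, hV, hr₀V, hVU, hσ, -, hσP⟩ := hloc r₀ hr₀ (P r₀) rfl
    exact ⟨V, hV, hr₀V, hVU, D.plot_congr hσ fun r hr => hσP r hr⟩

end DiffeologyStr

theorem smooth_iff_image_smooth {X Y : Type u} (Dx : DiffeologyStr X) (Dy : DiffeologyStr Y)
    (f : X → Y) :
    (∀ n U P, Dx.IsPlot n U P → Dy.IsPlot n U (f ∘ P)) ↔
      ∀ n U (P : (Fin n → ℝ) → Set X),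
        UPDProp Dx.IsPlot n U P → UPDProp Dy.IsPlot n U (fun r => f '' P r) := by
  refine ⟨fun hf _ _ _ => UPDProp.image hf, fun hf n U P hP => ?_⟩
  have hfP := hf n U _ (Dx.isPlot_iff_updProp_singleton.mp hP)
  simp only [image_singleton] at hfP
  exact Dy.isPlot_iff_updProp_singleton.mpr hfP

theorem exists_inverse_iff_exists_image_inverse {α β : Type u} (f : α → β) :
    (∃ g : β → α, LeftInverse g f ∧ RightInverse g f) ↔
      ∃ G : Set β → Set α, LeftInverse G (image f) ∧ RightInverse G (image f) := by
  simp only [← bijective_iff_has_inverse, Bijective, image_injective, image_surjective]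

/-- `f : X → Y` is a diffeomorphism iff the induced image map
`f⋆ : 𝔓ᵤ(X) → 𝔓ᵤ(Y)`, `A ↦ f '' A`, is a diffeomorphism of the union power spaces. -/
theorem diffeomorphism_iff_image_map_diffeomorphism {X : Type u} {Y : Type u}
    (Dx : DiffeologyStr X) (Dy : DiffeologyStr Y) (f : X → Y) :
    ((∃ g : Y → X, (∀ x, g (f x) = x) ∧ (∀ y, f (g y) = y)) ∧
      (∀ (n : ℕ) (U : Set (Fin n → ℝ)) (P : (Fin n → ℝ) → X),
        Dx.IsPlot n U P → Dy.IsPlot n U (f ∘ P)) ∧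
      (∀ g : Y → X, (∀ x, g (f x) = x) → (∀ y, f (g y) = y) →
        ∀ (n : ℕ) (U : Set (Fin n → ℝ)) (Q : (Fin n → ℝ) → Y),
          Dy.IsPlot n U Q → Dx.IsPlot n U (g ∘ Q))) ↔
    ((∃ G : Set Y → Set X, (∀ A : Set X, G (f '' A) = A) ∧ (∀ B : Set Y, f '' (G B) = B)) ∧
      (∀ (n : ℕ) (U : Set (Fin n → ℝ)) (P : (Fin n → ℝ) → Set X),
        UPDProp Dx.IsPlot n U P → UPDProp Dy.IsPlot n U (fun r => f '' P r)) ∧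
      (∀ G : Set Y → Set X, (∀ A : Set X, G (f '' A) = A) → (∀ B : Set Y, f '' (G B) = B) →
        ∀ (n : ℕ) (U : Set (Fin n → ℝ)) (Q : (Fin n → ℝ) → Set Y),
          UPDProp Dy.IsPlot n U Q → UPDProp Dx.IsPlot n U (fun r => G (Q r)))) := by
  constructor
  · rintro ⟨hinv, hf, hinvSmooth⟩
    obtain ⟨g, hgf, hfg⟩ : ∃ g, LeftInverse g f ∧ RightInverse g f := hinv
    refine ⟨(exists_inverse_iff_exists_image_inverse f).mp ⟨g, hgf, hfg⟩,
      (smooth_iff_image_smooth Dx Dy f).mp hf, fun G hGf _ => ?_⟩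
    have hG : G = image g := LeftInverse.eq_rightInverse hGf hfg.image_image
    subst hG
    exact (smooth_iff_image_smooth Dy Dx g).mp (hinvSmooth g hgf hfg)
  · rintro ⟨hinv, hf, hinvSmooth⟩
    refine ⟨(exists_inverse_iff_exists_image_inverse f).mpr hinv,
      (smooth_iff_image_smooth Dx Dy f).mpr hf, fun g hgf hfg => ?_⟩
    have hGinv := hinvSmooth (image g) (LeftInverse.image_image hgf)
      (LeftInverse.image_image (f := g) hfg)
    exact (smooth_iff_image_smooth Dy Dx g).mpr hGinv
end

section
/- Let X, Y be diffeological spaces and φ : X → 𝔓*(Y) a set-valued map with nonempty values. If for every x₀ ∈ X and y₀ ∈ φ(x₀) there exist a D-open neighborhood O ⊆ X of x₀ and a smooth map α : O → Y (for the subset diffeology on O) with α(x₀) = y₀ and α(x) ∈ φ(x) for all x ∈ O, then φ is smooth with respect to the union power set diffeology on 𝔓*(Y). -/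
open Set Function

universe u

theorem Diffeology'.isPlot_of_subset {X : Type u} (D : Diffeology' X) {n : ℕ}
    {U V : Set (Fin n → ℝ)} {P : (Fin n → ℝ) → X} (hP : D.IsPlot n U P) (hV : IsOpen V)
    (hVU : V ⊆ U) : D.IsPlot n V P :=
  D.smooth_comp hP hV contDiffOn_id hVU

theorem DOpen.isPlot_preimage {X : Type u} {D : Diffeology' X} {O : Set X} (hO : DOpen D O)
    {n : ℕ} {U : Set (Fin n → ℝ)} {P : (Fin n → ℝ) → X} (hP : D.IsPlot n U P) :
    D.IsPlot n {r ∈ U | P r ∈ O} P :=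
  D.isPlot_of_subset hP (hO n U P hP) fun _ hr => hr.1

theorem local_selections_imply_smooth_general {X : Type u} {Y : Type u}
    (Dx : Diffeology' X) (Dy : Diffeology' Y) (φ : X → Set Y)
    (h : ∀ x₀ : X, ∀ y₀ ∈ φ x₀, ∃ O : Set X, DOpen Dx O ∧ x₀ ∈ O ∧
      ∃ α : X → Y,
        (∀ (n : ℕ) (U : Set (Fin n → ℝ)) (P : (Fin n → ℝ) → X),
          Dx.IsPlot n U P → (∀ r ∈ U, P r ∈ O) → Dy.IsPlot n U (α ∘ P)) ∧
        α x₀ = y₀ ∧ ∀ x ∈ O, α x ∈ φ x) :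
    ∀ (n : ℕ) (U : Set (Fin n → ℝ)) (P : (Fin n → ℝ) → X),
      Dx.IsPlot n U P → UPDProp Dy.IsPlot n U (fun r => φ (P r)) := by
  intro n U P hP
  refine ⟨Dx.isOpen_of_isPlot hP, fun r₀ hr₀ y₀ hy₀ => ?_⟩
  obtain ⟨O, hO, hr₀O, α, hα, hαy₀, hαφ⟩ := h (P r₀) y₀ hy₀
  -- The implicit plot through `y₀` is the selection `α` composed with `P`, on `P⁻¹(O)`.
  exact ⟨{r ∈ U | P r ∈ O}, α ∘ P, hO n U P hP, ⟨hr₀, hr₀O⟩, fun _ hr => hr.1,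
    hα n _ P (hO.isPlot_preimage hP) fun _ hr => hr.2, hαy₀, fun r hr => hαφ (P r) hr.2⟩

/-- if through every point of every value of `φ` there is a smooth local
selection defined on a D-open neighborhood (with the subset diffeology), then `φ` is
smooth for the union power set diffeology. -/
theorem local_selections_imply_smooth {X : Type u} {Y : Type u}
    (Dx : Diffeology' X) (Dy : Diffeology' Y) (φ : X → Set Y)
    (hne : ∀ x, (φ x).Nonempty)
    (h : ∀ x₀ : X, ∀ y₀ ∈ φ x₀, ∃ O : Set X, DOpen Dx O ∧ x₀ ∈ O ∧
      ∃ α : X → Y,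
        (∀ (n : ℕ) (U : Set (Fin n → ℝ)) (P : (Fin n → ℝ) → X),
          Dx.IsPlot n U P → (∀ r ∈ U, P r ∈ O) → Dy.IsPlot n U (α ∘ P)) ∧
        α x₀ = y₀ ∧ ∀ x ∈ O, α x ∈ φ x) :
    ∀ (n : ℕ) (U : Set (Fin n → ℝ)) (P : (Fin n → ℝ) → X),
      Dx.IsPlot n U P → UPDProp Dy.IsPlot n U (fun r => φ (P r)) :=
  local_selections_imply_smooth_general Dx Dy φ h
end

section
/- Every plot of the strong power set diffeology on 𝔓(X) is a plot of the union power set diffeology; that is, the identity map 𝔓ₛ(X) → 𝔓ᵤ(X) is smooth. -/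
open Set Function

universe u

/-- A diffeology on a set `X`, encoded via total functions on `Fin n → ℝ`
together with a designated open domain `U`. -/
structure PlotDiffeology (X : Type u) where
  IsPlot : (n : ℕ) → Set (Fin n → ℝ) → ((Fin n → ℝ) → X) → Prop
  isOpen_of_isPlot : ∀ {n : ℕ} {U : Set (Fin n → ℝ)} {P : (Fin n → ℝ) → X},
    IsPlot n U P → IsOpen U
  const_isPlot : ∀ (n : ℕ) (U : Set (Fin n → ℝ)), IsOpen U → ∀ x : X,
    IsPlot n U (fun _ => x)
  locality : ∀ {n : ℕ} {U : Set (Fin n → ℝ)} {P : (Fin n → ℝ) → X}, IsOpen U →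
    (∀ r ∈ U, ∃ V, IsOpen V ∧ r ∈ V ∧ V ⊆ U ∧ IsPlot n V P) → IsPlot n U P
  smooth_comp : ∀ {n m : ℕ} {U : Set (Fin n → ℝ)} {P : (Fin n → ℝ) → X}
    {V : Set (Fin m → ℝ)} {F : (Fin m → ℝ) → (Fin n → ℝ)},
    IsPlot n U P → IsOpen V → ContDiffOn ℝ (⊤ : ℕ∞) F V → Set.MapsTo F V U →
    IsPlot m V (P ∘ F)
  plot_congr : ∀ {n : ℕ} {U : Set (Fin n → ℝ)} {P Q : (Fin n → ℝ) → X},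
    IsPlot n U P → Set.EqOn P Q U → IsPlot n U Q

/-- A smooth family of `m`-plots of `X` parametrized by an open set `U ⊆ ℝⁿ`
(the standard functional diffeology on the diffeology `D` of `X`):
each `ρ r = (ρdom r, ρfun r)` is a plot, and locally, on common domains,
`(r, s) ↦ ρfun r s` is a plot of `X` (on `V × W ⊆ ℝⁿ × ℝᵐ ≅ ℝ^(n+m)`). -/
def SmoothFamily {X : Type u} (D : PlotDiffeology X) (n m : ℕ) (U : Set (Fin n → ℝ))
    (ρdom : (Fin n → ℝ) → Set (Fin m → ℝ))
    (ρfun : (Fin n → ℝ) → (Fin m → ℝ) → X) : Prop :=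
  IsOpen U ∧ (∀ r ∈ U, D.IsPlot m (ρdom r) (ρfun r)) ∧
    ∀ r₀ ∈ U, ∀ s₀ ∈ ρdom r₀,
      ∃ (V : Set (Fin n → ℝ)) (W : Set (Fin m → ℝ)),
        IsOpen V ∧ r₀ ∈ V ∧ V ⊆ U ∧ IsOpen W ∧ s₀ ∈ W ∧
        (∀ r ∈ V, W ⊆ ρdom r) ∧
        D.IsPlot (n + m)
          {z | (fun i => z (Fin.castAdd m i)) ∈ V ∧ (fun j => z (Fin.natAdd n j)) ∈ W}
          (fun z => ρfun (fun i => z (Fin.castAdd m i)) (fun j => z (Fin.natAdd n j)))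

/-- The strong power set property SPD: every plot of `X` with image in a value `P r₀`
extends to a local smooth family of plots with images in the nearby values. -/
def SPDProp {X : Type u} (D : PlotDiffeology X)
    (n : ℕ) (U : Set (Fin n → ℝ)) (P : (Fin n → ℝ) → Set X) : Prop :=
  IsOpen U ∧ ∀ r₀ ∈ U, ∀ (m : ℕ) (W₀ : Set (Fin m → ℝ)) (Q₀ : (Fin m → ℝ) → X),
    D.IsPlot m W₀ Q₀ → (∀ s ∈ W₀, Q₀ s ∈ P r₀) →
    ∃ V : Set (Fin n → ℝ), IsOpen V ∧ r₀ ∈ V ∧ V ⊆ U ∧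
      ∃ (ρdom : (Fin n → ℝ) → Set (Fin m → ℝ)) (ρfun : (Fin n → ℝ) → (Fin m → ℝ) → X),
        SmoothFamily D n m V ρdom ρfun ∧ ρdom r₀ = W₀ ∧ ρfun r₀ = Q₀ ∧
        ∀ r ∈ V, ∀ s ∈ ρdom r, ρfun r s ∈ P r

theorem contDiff_finAppend_const {n m : ℕ} {k : WithTop ℕ∞} (s : Fin m → ℝ) :
    ContDiff ℝ k (fun r : Fin n → ℝ => Fin.append r s) := by
  refine contDiff_pi.2 fun l => ?_
  induction l using Fin.addCases with
  | left i => simpa only [Fin.append_left] using contDiff_apply ℝ ℝ i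
  | right j => simpa only [Fin.append_right] using contDiff_const

theorem SmoothFamily.exists_isPlot_eval {X : Type u} {D : PlotDiffeology X} {n m : ℕ}
    {U : Set (Fin n → ℝ)} {ρdom : (Fin n → ℝ) → Set (Fin m → ℝ)}
    {ρfun : (Fin n → ℝ) → (Fin m → ℝ) → X} (h : SmoothFamily D n m U ρdom ρfun)
    {r₀ : Fin n → ℝ} (hr₀ : r₀ ∈ U) {s₀ : Fin m → ℝ} (hs₀ : s₀ ∈ ρdom r₀) :
    ∃ V, IsOpen V ∧ r₀ ∈ V ∧ V ⊆ U ∧ (∀ r ∈ V, s₀ ∈ ρdom r) ∧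
      D.IsPlot n V (fun r => ρfun r s₀) := by
  obtain ⟨V, W, hV, hr₀V, hVU, -, hs₀W, hWdom, hplot⟩ := h.2.2 r₀ hr₀ s₀ hs₀
  refine ⟨V, hV, hr₀V, hVU, fun r hr => hWdom r hr hs₀W, ?_⟩
  have hmaps : MapsTo (fun r : Fin n → ℝ => Fin.append r s₀) V
      {z | (fun i => z (Fin.castAdd m i)) ∈ V ∧ (fun j => z (Fin.natAdd n j)) ∈ W} :=
    fun r hr => by
      simpa only [mem_ofPred_eq, Fin.append_left, Fin.append_right] using And.intro hr hs₀W
  have := D.smooth_comp hplot hV (contDiff_finAppend_const s₀).contDiffOn hmaps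
  simpa only [comp_def, Fin.append_left, Fin.append_right] using this

/-- every plot of the strong power set diffeology is a plot of the union
power set diffeology, i.e. the identity `𝔓ₛ(X) → 𝔓ᵤ(X)` is smooth. -/
theorem strong_finer_than_union {X : Type u} (D : PlotDiffeology X)
    (n : ℕ) (U : Set (Fin n → ℝ)) (P : (Fin n → ℝ) → Set X)
    (h : SPDProp D n U P) : UPDProp D.IsPlot n U P := by
  refine ⟨h.1, fun r₀ hr₀ x₀ hx₀ => ?_⟩
  -- A `0`-plot is a point: SPD for the constant `0`-plot at `x₀` gives the family of
  -- points `r ↦ ρfun r 0` through `x₀`.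
  obtain ⟨V₁, -, hr₀V₁, hV₁U, ρdom, ρfun, hfamily, hdom₀, hfun₀, hval⟩ :=
    h.2 r₀ hr₀ 0 univ (fun _ => x₀) (D.const_isPlot 0 univ isOpen_univ x₀) fun _ _ => hx₀
  obtain ⟨V, hV, hr₀V, hVV₁, hdom, hplot⟩ :=
    hfamily.exists_isPlot_eval hr₀V₁ (s₀ := 0) (hdom₀ ▸ mem_univ _)
  exact ⟨V, fun r => ρfun r 0, hV, hr₀V, hVV₁.trans hV₁U, hplot, congrFun hfun₀ 0,
    fun r hr => hval r (hVV₁ hr) 0 (hdom r hr)⟩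
end

section
/- Let X be a diffeological space with diffeology 𝒟, and equip 𝒟 with the standard functional diffeology (a parametrization ρ : U → 𝒟 is a plot iff for all r₀ ∈ U and s₀ ∈ dom(ρ(r₀)), there exist neighborhoods V of r₀ and W of s₀ with W ⊆ dom(ρ(r)) for all r ∈ V and (r,s) ↦ ρ(r)(s) a plot of X on V × W). Then the image map Im : 𝒟 → 𝔓ᵤ(X), P ↦ Im(P), is smooth for the union power set diffeology. -/
open Set Function

universe u

/-!
A point `x₀ = ρ(r₀)(s₀)` of `Im ρ(r₀)` moves smoothly with `r` as `σ r = ρ(r)(s₀)`: this is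
the plot `(r, s) ↦ ρ(r)(s)` of the functional diffeology restricted to the slice `s = s₀`,
and `s₀` stays in the domain of `ρ(r)` for `r` near `r₀`.
-/

theorem contDiff_fin_append_const {n m : ℕ} (s : Fin m → ℝ) :
    ContDiff ℝ (⊤ : ℕ∞) (fun r : Fin n → ℝ => Fin.append r s) := by
  refine contDiff_pi.2 fun k => Fin.addCases (fun i => ?_) (fun j => ?_) k
  · simpa only [Fin.append_left] using contDiff_apply ℝ ℝ i
  · simpa only [Fin.append_right] using contDiff_const

namespace PlotDiffeology

variable {X : Type u} (D : PlotDiffeology X)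

theorem isPlot_slice {n m : ℕ} {V : Set (Fin n → ℝ)} {W : Set (Fin m → ℝ)}
    {f : (Fin n → ℝ) → (Fin m → ℝ) → X} {s : Fin m → ℝ} (hV : IsOpen V) (hs : s ∈ W)
    (hf : D.IsPlot (n + m)
      {z | (fun i => z (Fin.castAdd m i)) ∈ V ∧ (fun j => z (Fin.natAdd n j)) ∈ W}
      (fun z => f (fun i => z (Fin.castAdd m i)) (fun j => z (Fin.natAdd n j)))) :
    D.IsPlot n V (fun r => f r s) := by
  have hmaps : MapsTo (fun r : Fin n → ℝ => Fin.append r s) V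
      {z | (fun i => z (Fin.castAdd m i)) ∈ V ∧ (fun j => z (Fin.natAdd n j)) ∈ W} :=
    fun r hr => by simpa only [mem_ofPred_eq, Fin.append_left, Fin.append_right] using ⟨hr, hs⟩
  refine D.plot_congr (D.smooth_comp hf hV (contDiff_fin_append_const s).contDiffOn hmaps) ?_
  intro r _
  simp only [comp_apply, Fin.append_left, Fin.append_right]

end PlotDiffeology

/-- the image map `Im : 𝒟 → 𝔓ᵤ(X)`, `P ↦ Im(P)`, is smooth: it sends
smooth families of plots (plots of the standard functional diffeology on `𝒟`) to plots
of the union power set diffeology. -/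
theorem image_map_smooth {X : Type u} (D : PlotDiffeology X)
    (n m : ℕ) (U : Set (Fin n → ℝ))
    (ρdom : (Fin n → ℝ) → Set (Fin m → ℝ))
    (ρfun : (Fin n → ℝ) → (Fin m → ℝ) → X)
    (h : SmoothFamily D n m U ρdom ρfun) :
    UPDProp D.IsPlot n U (fun r => ρfun r '' ρdom r) := by
  obtain ⟨hU, -, hloc⟩ := h
  refine ⟨hU, fun r₀ hr₀ x₀ hx₀ => ?_⟩
  obtain ⟨s₀, hs₀, rfl⟩ := hx₀
  obtain ⟨V, W, hV, hr₀V, hVU, -, hs₀W, hWdom, hplot⟩ := hloc r₀ hr₀ s₀ hs₀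
  exact ⟨V, fun r => ρfun r s₀, hV, hr₀V, hVU, D.isPlot_slice hV hs₀W hplot, rfl,
    fun r hr => mem_image_of_mem _ (hWdom r hr hs₀W)⟩
end

section
/- On 𝔓(ℝ) with the globally projectable diffeology 𝒫_{gp,D} generated by the diffeomorphism group action, the intersection map is not smooth: the paths P₁(t) = {t} and P₂(t) = {−t} (orbits of {0} under the translations x ↦ x + t and x ↦ x − t) are plots of 𝒫_{gp,D}, but t ↦ P₁(t) ∩ P₂(t), which equals {0} at t = 0 and ∅ for t ≠ 0, is not a plot of 𝒫_{gp,D}, because ∅ is isolated in that diffeology (every plot through ∅ is locally constant equal to ∅ near any parameter where it takes the value ∅). -/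
open Set Function

/-- A generating (globally projectable) parametrization of `𝔓*(ℝ)` for the diffeology
`𝒫_{gp,D}`: the orbit of a fixed nonempty set `A ⊆ ℝ` under a smooth family of
diffeomorphisms of `ℝ` (smooth family: both the evaluation and the evaluation of the
inverses are smooth). -/
def GPBase (n : ℕ) (U : Set (Fin n → ℝ)) (P : (Fin n → ℝ) → Set ℝ) : Prop :=
  IsOpen U ∧ ∃ (φ : (Fin n → ℝ) → ℝ → ℝ) (A : Set ℝ), A.Nonempty ∧
    (∀ r ∈ U, Function.Bijective (φ r)) ∧
    ContDiffOn ℝ (⊤ : ℕ∞) (fun p : (Fin n → ℝ) × ℝ => φ p.1 p.2) (U ×ˢ Set.univ) ∧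
    ContDiffOn ℝ (⊤ : ℕ∞) (fun p : (Fin n → ℝ) × ℝ => Function.invFun (φ p.1) p.2)
      (U ×ˢ Set.univ) ∧
    ∀ r ∈ U, P r = φ r '' A

/-- A plot of the globally projectable diffeology `𝒫_{gp,D}` on `𝔓(ℝ)`: locally either
constant equal to `∅` or a generating parametrization. -/
def GPPlot (n : ℕ) (U : Set (Fin n → ℝ)) (P : (Fin n → ℝ) → Set ℝ) : Prop :=
  IsOpen U ∧ ∀ r ∈ U, ∃ V : Set (Fin n → ℝ), IsOpen V ∧ r ∈ V ∧ V ⊆ U ∧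
    ((∀ s ∈ V, P s = ∅) ∨ GPBase n V P)

open Filter Topology

/-!
Plots of `𝒫_{gp,D}` are locally either constantly `∅` or an orbit of a nonempty set, hence
locally nonempty; so whether a plot takes the value `∅` is locally constant in the parameter.
The translation orbits `t ↦ {t}` and `t ↦ {-t}` of `{0}` are plots, but their intersection is
`{0}` at `t = 0` and `∅` at every `t ≠ 0`, so it is not.
-/

lemma invFun_add_right (c : ℝ) : invFun (· + c) = (· - c) :=
  invFun_eq_of_injective_of_rightInverse (add_left_injective c) fun y => sub_add_cancel y c

lemma gpBase_singleton {n : ℕ} {c : (Fin n → ℝ) → ℝ} (hc : ContDiff ℝ (⊤ : ℕ∞) c) :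
    GPBase n univ fun r => {c r} := by
  refine ⟨isOpen_univ, fun r x => x + c r, {0}, singleton_nonempty 0,
    fun r _ => (Equiv.addRight (c r)).bijective, ?_, ?_, fun r _ => by simp⟩
  · exact (contDiff_snd.add (hc.comp contDiff_fst)).contDiffOn
  · simp only [invFun_add_right]
    exact (contDiff_snd.sub (hc.comp contDiff_fst)).contDiffOn

section

variable {n : ℕ} {U : Set (Fin n → ℝ)} {P : (Fin n → ℝ) → Set ℝ}

lemma GPBase.gpPlot (hP : GPBase n U P) : GPPlot n U P :=
  ⟨hP.1, fun _ hr => ⟨U, hP.1, hr, subset_rfl, Or.inr hP⟩⟩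

lemma GPBase.nonempty (hP : GPBase n U P) {r : Fin n → ℝ} (hr : r ∈ U) : (P r).Nonempty := by
  obtain ⟨-, φ, A, hA, -, -, -, hPφ⟩ := hP
  exact hPφ r hr ▸ hA.image (φ r)

lemma GPPlot.eventually_nonempty_iff (hP : GPPlot n U P) {r₀ : Fin n → ℝ} (hr₀ : r₀ ∈ U) :
    ∀ᶠ r in 𝓝 r₀, ((P r).Nonempty ↔ (P r₀).Nonempty) := by
  obtain ⟨V, hV, hr₀V, -, hempty | hbase⟩ := hP.2 r₀ hr₀
  · filter_upwards [hV.mem_nhds hr₀V] with r hr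
    simp [hempty r hr, hempty r₀ hr₀V]
  · filter_upwards [hV.mem_nhds hr₀V] with r hr
    exact iff_of_true (hbase.nonempty hr) (hbase.nonempty hr₀V)

end

lemma singleton_inter_singleton_neg_nonempty_iff (t : ℝ) :
    ({t} ∩ {-t} : Set ℝ).Nonempty ↔ t = 0 := by
  rw [singleton_inter_nonempty, mem_singleton_iff, eq_neg_iff_add_eq_zero, ← two_mul,
    mul_eq_zero, or_iff_right two_ne_zero]

/-- on `𝔓(ℝ)` with the globally projectable diffeology `𝒫_{gp,D}`, the
paths `P₁ t = {t}` and `P₂ t = {-t}` (orbits of `{0}` under translations) are plots, the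
empty set is isolated (every plot is locally constant `∅` near any parameter where its
value is `∅`), and the intersection `t ↦ P₁ t ∩ P₂ t` is not a plot; hence the
intersection map is not smooth. -/
theorem intersection_not_smooth_gpD :
    GPPlot 1 Set.univ (fun r => ({r 0} : Set ℝ)) ∧
    GPPlot 1 Set.univ (fun r => ({-(r 0)} : Set ℝ)) ∧
    (∀ (n : ℕ) (U : Set (Fin n → ℝ)) (P : (Fin n → ℝ) → Set ℝ), GPPlot n U P →
      ∀ r₀ ∈ U, P r₀ = ∅ → ∃ V : Set (Fin n → ℝ), IsOpen V ∧ r₀ ∈ V ∧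
        ∀ r ∈ V, P r = ∅) ∧
    ¬ GPPlot 1 Set.univ (fun r => ({r 0} ∩ {-(r 0)} : Set ℝ)) := by
  have hcoord : ContDiff ℝ (⊤ : ℕ∞) fun r : Fin 1 → ℝ => r 0 := contDiff_apply ℝ ℝ 0
  refine ⟨(gpBase_singleton hcoord).gpPlot, (gpBase_singleton hcoord.neg).gpPlot, ?_, ?_⟩
  · intro n U P hP r₀ hr₀ hempty
    obtain ⟨V, hPV, hV, hr₀V⟩ := eventually_nhds_iff.1 (hP.eventually_nonempty_iff hr₀)
    exact ⟨V, hV, hr₀V, fun r hr => by simpa [hempty, not_nonempty_iff_eq_empty] using hPV r hr⟩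
  · intro hP
    have hline : Tendsto (fun t : ℝ => fun _ : Fin 1 => t) (𝓝[≠] 0) (𝓝 fun _ => 0) :=
      ((continuous_pi fun _ => continuous_id).tendsto 0).mono_left nhdsWithin_le_nhds
    obtain ⟨t, hnonempty, ht⟩ :=
      ((hline.eventually (hP.eventually_nonempty_iff (mem_univ _))).and
        self_mem_nhdsWithin).exists
    simp only [singleton_inter_singleton_neg_nonempty_iff, iff_true] at hnonempty
    exact ht hnonempty
end
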